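/- arXiv:1701.05139 — 5 statements merged into one kernel-verified Lean document; each statement's English description precedes it below -/
import Mathlib

section
/- A functor F : A ⥤ B between groupoids is final (i.e., for every object b of B the comma category b/F is nonempty and connected) if and only if F is full and essentially surjective on objects. -/
/-!
Since `A` is a groupoid, so is every comma category `b/F`, and a connected groupoid has a
morphism between any two of its objects. A morphism `(f : b ⟶ F a) ⟶ (f' : b ⟶ F a')` of `b/F`
is a `g : a ⟶ a'` with `f ≫ F.map g = f'`; taking `f = 𝟙` gives fullness. Conversely, when
`F` is full, `F.map` of a preimage of `inv f ≫ f'` is such a morphism, and essential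
surjectivity makes `b/F` nonempty.
-/

open CategoryTheory

universe w v u

/-- `F` is a discrete fibration: every morphism into the image of `F` with prescribed
codomain has a unique lift. -/
def IsDiscreteFibration {A : Type*} [Category A] {B : Type*} [Category B] (F : A ⥤ B) : Prop :=
  ∀ {a' : A} {b : B} (β : b ⟶ F.obj a'),
    ∃! p : Σ a : A, a ⟶ a',
      (⟨F.obj p.1, F.map p.2⟩ : Σ x : B, x ⟶ F.obj a') = ⟨b, β⟩

/-- `F` is a discrete opfibration: every morphism out of the image of `F` with prescribed
domain has a unique lift. -/
def IsDiscreteOpfibration {A : Type*} [Category A] {B : Type*} [Category B] (F : A ⥤ B) : Prop :=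
  ∀ {a : A} {b : B} (β : F.obj a ⟶ b),
    ∃! p : Σ a' : A, a ⟶ a',
      (⟨F.obj p.1, F.map p.2⟩ : Σ x : B, F.obj a ⟶ x) = ⟨b, β⟩

namespace CategoryTheory

instance StructuredArrow.isGroupoid {A : Type*} [Category A] [IsGroupoid A] {B : Type*}
    [Category B] (b : B) (F : A ⥤ B) : IsGroupoid (StructuredArrow b F) :=
  isGroupoid_of_reflects_iso (StructuredArrow.proj b F)

namespace Functor

variable {A : Type*} [Category A] {B : Type*} [Category B] (F : A ⥤ B)

theorem full_of_final [IsGroupoid A] [F.Final] : F.Full where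
  map_surjective {a _} φ := by
    let : Groupoid (StructuredArrow (F.obj a) F) := Groupoid.ofIsGroupoid
    obtain ⟨g⟩ := nonempty_hom_of_preconnected_groupoid
      (StructuredArrow.mk (𝟙 (F.obj a))) (StructuredArrow.mk φ)
    exact ⟨g.right, by simpa using g.w⟩

theorem essSurj_of_final [IsGroupoid B] [F.Final] : F.EssSurj where
  mem_essImage b := by
    obtain ⟨f⟩ : Nonempty (StructuredArrow b F) := inferInstance
    exact ⟨f.right, ⟨(asIso f.hom).symm⟩⟩

theorem final_of_full_of_essSurj [IsGroupoid B] [F.Full] [F.EssSurj] : F.Final where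
  out b :=
    have : Nonempty (StructuredArrow b F) := ⟨StructuredArrow.mk (F.objObjPreimageIso b).inv⟩
    zigzag_isConnected fun f f' =>
      Zigzag.of_hom <|
        StructuredArrow.homMk (F.preimage (CategoryTheory.inv f.hom ≫ f'.hom)) (by simp)

end Functor

end CategoryTheory

/-- A functor between groupoids is final iff it is full and essentially surjective. -/
theorem final_iff_full_and_essSurj {A : Type u} [Groupoid A] {B : Type u} [Groupoid B]
    (F : A ⥤ B) : F.Final ↔ (F.Full ∧ F.EssSurj) :=
  ⟨fun _ => ⟨F.full_of_final, F.essSurj_of_final⟩, fun ⟨_, _⟩ => F.final_of_full_of_essSurj⟩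
end

section
/- Let A and E be groupoids and B a category, and let Q : E ⥤ A, P : E ⥤ B be functors. Then the pair (Q, P) forms a discrete two-sided fibration if and only if the induced functor ⟨Q, P⟩ : E ⥤ A × B is a discrete fibration. -/
open CategoryTheory

universe w v u

/-- A span `(Q : E ⥤ A, P : E ⥤ B)` is a discrete two-sided fibration if:
(i) every arrow `b ⟶ P e'` has a unique `Q`-vertical lift ending at `e'`;
(ii) every arrow `Q e ⟶ a` has a unique `P`-vertical lift starting at `e`;
(iii) every `ε : e ⟶ e'` factors as a `P`-vertical lift of `Q ε` followed by a
`Q`-vertical lift of `P ε`. -/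
def IsDiscreteTwoSidedFibration {E A B : Type*} [Category E] [Category A] [Category B]
    (Q : E ⥤ A) (P : E ⥤ B) : Prop :=
  (∀ {e' : E} {b : B} (β : b ⟶ P.obj e'),
    ∃! p : Σ e : E, e ⟶ e',
      (⟨P.obj p.1, P.map p.2⟩ : Σ x : B, x ⟶ P.obj e') = ⟨b, β⟩ ∧
      (⟨Q.obj p.1, Q.map p.2⟩ : Σ x : A, x ⟶ Q.obj e') = ⟨Q.obj e', 𝟙 (Q.obj e')⟩) ∧
  (∀ {e : E} {a : A} (α : Q.obj e ⟶ a),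
    ∃! p : Σ e' : E, e ⟶ e',
      (⟨Q.obj p.1, Q.map p.2⟩ : Σ x : A, Q.obj e ⟶ x) = ⟨a, α⟩ ∧
      (⟨P.obj p.1, P.map p.2⟩ : Σ x : B, P.obj e ⟶ x) = ⟨P.obj e, 𝟙 (P.obj e)⟩) ∧
  (∀ {e e' : E} (ε : e ⟶ e'),
    ∃ (m : E) (u : e ⟶ m) (v : m ⟶ e'),
      u ≫ v = ε ∧
      (⟨Q.obj m, Q.map u⟩ : Σ x : A, Q.obj e ⟶ x) = ⟨Q.obj e', Q.map ε⟩ ∧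
      (⟨P.obj m, P.map u⟩ : Σ x : B, P.obj e ⟶ x) = ⟨P.obj e, 𝟙 (P.obj e)⟩ ∧
      (⟨Q.obj m, Q.map v⟩ : Σ x : A, x ⟶ Q.obj e') = ⟨Q.obj e', 𝟙 (Q.obj e')⟩ ∧
      (⟨P.obj m, P.map v⟩ : Σ x : B, x ⟶ P.obj e') = ⟨P.obj e, P.map ε⟩)

/-!
An arrow of `A × B` into `(Q e', P e')` is a pair `(α, β)`. Lift `β` to a `Q`-vertical
`v : m ⟶ e'`, then lift `Q v ≫ α⁻¹` to a `P`-vertical `u` out of `m`: the arrow `u⁻¹ ≫ v` lifts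
`(α, β)`, and factoring any other lift as in (iii) shows that its two factors are `u⁻¹` and `v`.
Conversely, the vertical lifts are the lifts of `(𝟙, β)` and the inverses of the lifts of
`(α⁻¹, 𝟙)`, and `ε = (ε ≫ v⁻¹) ≫ v` where `v` lifts `(𝟙, P ε)`.
-/

section ArrowsWithFixedEnd

variable {C : Type*} [Category C]

lemma sigma_comp_inv_eq_of_sigma_eq {c d x y : C} (f : d ⟶ c) {g : x ⟶ c} {k : y ⟶ c}
    [IsIso g] [IsIso k] (h : (⟨x, g⟩ : Σ z : C, z ⟶ c) = ⟨y, k⟩) :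
    (⟨x, f ≫ inv g⟩ : Σ z : C, d ⟶ z) = ⟨y, f ≫ inv k⟩ := by
  obtain ⟨rfl, ⟨⟩⟩ := Sigma.mk.inj_iff.mp h
  rfl

lemma sigma_inv_comp_eq_of_sigma_eq {c d x y : C} (f : d ⟶ c) {g : d ⟶ x} {k : d ⟶ y}
    [IsIso g] [IsIso k] (h : (⟨x, g⟩ : Σ z : C, d ⟶ z) = ⟨y, k⟩) :
    (⟨x, inv g ≫ f⟩ : Σ z : C, z ⟶ c) = ⟨y, inv k ≫ f⟩ := by
  obtain ⟨rfl, ⟨⟩⟩ := Sigma.mk.inj_iff.mp h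
  rfl

lemma sigma_inv_eq_id_of_sigma_eq_id {x y : C} {g : y ⟶ x} [IsIso g]
    (h : (⟨x, g⟩ : Σ z : C, y ⟶ z) = ⟨y, 𝟙 y⟩) : (⟨y, inv g⟩ : Σ z : C, x ⟶ z) = ⟨x, 𝟙 x⟩ := by
  obtain ⟨rfl, ⟨⟩⟩ := Sigma.mk.inj_iff.mp h
  simp

end ArrowsWithFixedEnd

section Prod

variable {C D D' : Type*} [Category C] [Category D] [Category D'] (F : C ⥤ D) (G : C ⥤ D')

lemma sigma_prod'_eq_iff {x c : C} (f : x ⟶ c) {a : D} {b : D'} (α : a ⟶ F.obj c)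
    (β : b ⟶ G.obj c) :
    (⟨(F.prod' G).obj x, (F.prod' G).map f⟩ : Σ z, z ⟶ (F.prod' G).obj c) = ⟨(a, b), (α, β)⟩ ↔
      (⟨F.obj x, F.map f⟩ : Σ z, z ⟶ F.obj c) = ⟨a, α⟩ ∧
        (⟨G.obj x, G.map f⟩ : Σ z, z ⟶ G.obj c) = ⟨b, β⟩ := by
  constructor
  · rintro ⟨⟩
    exact ⟨rfl, rfl⟩
  · rintro ⟨⟨⟩, ⟨⟩⟩
    rfl

lemma isDiscreteFibration_prod'_iff :
    IsDiscreteFibration (F.prod' G) ↔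
      ∀ {c : C} {a : D} {b : D'} (α : a ⟶ F.obj c) (β : b ⟶ G.obj c),
        ∃! p : Σ x : C, x ⟶ c,
          (⟨F.obj p.1, F.map p.2⟩ : Σ z, z ⟶ F.obj c) = ⟨a, α⟩ ∧
            (⟨G.obj p.1, G.map p.2⟩ : Σ z, z ⟶ G.obj c) = ⟨b, β⟩ := by
  constructor
  · intro h c a b α β
    exact (existsUnique_congr fun p : Σ x : C, x ⟶ c => sigma_prod'_eq_iff F G p.2 α β).mp
      (h (b := (a, b)) (α, β))
  · rintro h c ⟨a, b⟩ ⟨α, β⟩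
    exact (existsUnique_congr fun p : Σ x : C, x ⟶ c => sigma_prod'_eq_iff F G p.2 α β).mpr
      (h α β)

end Prod

section

variable {E A B : Type*}

lemma IsDiscreteFibration.existsUnique_fstVertical_liftTo [Category E] [Category A] [Category B]
    {Q : E ⥤ A} {P : E ⥤ B} (h : IsDiscreteFibration (Q.prod' P)) {e' : E} {b : B}
    (β : b ⟶ P.obj e') :
    ∃! p : Σ e : E, e ⟶ e',
      (⟨P.obj p.1, P.map p.2⟩ : Σ x : B, x ⟶ P.obj e') = ⟨b, β⟩ ∧
      (⟨Q.obj p.1, Q.map p.2⟩ : Σ x : A, x ⟶ Q.obj e') = ⟨Q.obj e', 𝟙 (Q.obj e')⟩ := by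
  simpa only [and_comm] using (isDiscreteFibration_prod'_iff Q P).mp h (𝟙 _) β

lemma IsDiscreteFibration.existsUnique_sndVertical_liftFrom [Groupoid E] [Groupoid A]
    [Category B] {Q : E ⥤ A} {P : E ⥤ B} (h : IsDiscreteFibration (Q.prod' P)) {e : E} {a : A}
    (α : Q.obj e ⟶ a) :
    ∃! p : Σ e' : E, e ⟶ e',
      (⟨Q.obj p.1, Q.map p.2⟩ : Σ x : A, Q.obj e ⟶ x) = ⟨a, α⟩ ∧
      (⟨P.obj p.1, P.map p.2⟩ : Σ x : B, P.obj e ⟶ x) = ⟨P.obj e, 𝟙 (P.obj e)⟩ := by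
  obtain ⟨⟨m, w⟩, ⟨hwQ, hwP⟩, w_unique⟩ :=
    (isDiscreteFibration_prod'_iff Q P).mp h (inv α) (𝟙 (P.obj e))
  refine ⟨⟨m, inv w⟩, ⟨?_, ?_⟩, ?_⟩
  · simpa using sigma_comp_inv_eq_of_sigma_eq (𝟙 _) hwQ
  · simpa using sigma_comp_inv_eq_of_sigma_eq (𝟙 _) hwP
  · rintro ⟨m', w'⟩ ⟨hQ, hP⟩
    obtain ⟨rfl, ⟨⟩⟩ := Sigma.mk.inj_iff.mp hQ
    obtain ⟨⟩ : (⟨m', inv w'⟩ : Σ x : E, x ⟶ e) = ⟨m, w⟩ := by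
      refine w_unique _ ⟨by simp, ?_⟩
      simpa using sigma_inv_comp_eq_of_sigma_eq (𝟙 _) hP
    simp

lemma IsDiscreteFibration.exists_factorization [Groupoid E] [Category A] [Category B]
    {Q : E ⥤ A} {P : E ⥤ B} (h : IsDiscreteFibration (Q.prod' P)) {e e' : E} (ε : e ⟶ e') :
    ∃ (m : E) (u : e ⟶ m) (v : m ⟶ e'),
      u ≫ v = ε ∧
      (⟨Q.obj m, Q.map u⟩ : Σ x : A, Q.obj e ⟶ x) = ⟨Q.obj e', Q.map ε⟩ ∧
      (⟨P.obj m, P.map u⟩ : Σ x : B, P.obj e ⟶ x) = ⟨P.obj e, 𝟙 (P.obj e)⟩ ∧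
      (⟨Q.obj m, Q.map v⟩ : Σ x : A, x ⟶ Q.obj e') = ⟨Q.obj e', 𝟙 (Q.obj e')⟩ ∧
      (⟨P.obj m, P.map v⟩ : Σ x : B, x ⟶ P.obj e') = ⟨P.obj e, P.map ε⟩ := by
  obtain ⟨⟨m, v⟩, ⟨hvQ, hvP⟩, -⟩ :=
    (isDiscreteFibration_prod'_iff Q P).mp h (𝟙 (Q.obj e')) (P.map ε)
  refine ⟨m, ε ≫ inv v, v, by simp, ?_, ?_, hvQ, hvP⟩
  · simpa using sigma_comp_inv_eq_of_sigma_eq (Q.map ε) hvQ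
  · simpa using sigma_comp_inv_eq_of_sigma_eq (P.map ε) hvP

lemma IsDiscreteTwoSidedFibration.isDiscreteFibration_prod' [Groupoid E] [Groupoid A]
    [Category B] {Q : E ⥤ A} {P : E ⥤ B} (h : IsDiscreteTwoSidedFibration Q P) :
    IsDiscreteFibration (Q.prod' P) := by
  obtain ⟨liftTo, liftFrom, factor⟩ := h
  rw [isDiscreteFibration_prod'_iff]
  intro e' a b α β
  obtain ⟨⟨m, v⟩, ⟨hvP, hvQ⟩, v_unique⟩ := liftTo β
  obtain ⟨⟨n, u⟩, ⟨huQ, huP⟩, u_unique⟩ := liftFrom (Q.map v ≫ inv α)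
  refine ⟨⟨n, inv u ≫ v⟩, ⟨?_, ?_⟩, ?_⟩
  · simpa using sigma_inv_comp_eq_of_sigma_eq (Q.map v) huQ
  · obtain ⟨rfl, ⟨⟩⟩ := Sigma.mk.inj_iff.mp hvP
    simpa using sigma_inv_comp_eq_of_sigma_eq (P.map v) huP
  · rintro ⟨n', ε⟩ ⟨hQ, hP⟩
    obtain ⟨rfl, ⟨⟩⟩ := Sigma.mk.inj_iff.mp hQ
    obtain ⟨m', u', v', rfl, -, hu'P, hv'Q, hv'P⟩ := factor ε
    obtain ⟨⟩ : (⟨m', v'⟩ : Σ x : E, x ⟶ e') = ⟨m, v⟩ := v_unique _ ⟨hv'P.trans hP, hv'Q⟩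
    obtain ⟨⟩ : (⟨n', inv u'⟩ : Σ x : E, _ ⟶ x) = ⟨n, u⟩ := by
      refine u_unique _ ⟨by simp, ?_⟩
      simpa using sigma_inv_eq_id_of_sigma_eq_id hu'P
    simp

end

/-- For groupoids `A`, `E` and a category `B`, a span `(Q, P)` is a discrete two-sided
fibration iff `⟨Q, P⟩ : E ⥤ A × B` is a discrete fibration. -/
theorem twoSided_iff_discreteFibration_pair {E : Type u} [Groupoid E] {A : Type u} [Groupoid A]
    {B : Type u} [Category.{u} B] (Q : E ⥤ A) (P : E ⥤ B) :
    IsDiscreteTwoSidedFibration Q P ↔ IsDiscreteFibration (Q.prod' P) :=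
  ⟨IsDiscreteTwoSidedFibration.isDiscreteFibration_prod', fun h =>
    ⟨h.existsUnique_fstVertical_liftTo, h.existsUnique_sndVertical_liftFrom,
      h.exists_factorization⟩⟩
end

section
/- Every functor F : A ⥤ B factors as F = D ∘ E where E is final and D is a discrete fibration, and this factorization is unique up to isomorphism (i.e., (final, discrete fibration) is an orthogonal factorization system on Cat). -/
open CategoryTheory

universe w v u

/-!
The middle category is the category of elements of the presheaf `b ↦ π₀(b/F)` of connected
components; its projection to `B` is a discrete fibration, and `a ↦ (F a, [𝟙])` is final because
the comma category under `(b, x)` is, up to relabelling, the connected component `x` of `b/F`.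

Uniqueness comes from orthogonality: in a commutative square `J ⋙ S = T ⋙ P` with `J` final and
`P` a discrete fibration, the diagonal sends `y` to the domain of the `P`-lift, ending at `T x`,
of `S f : S y ⟶ S (J x) = P (T x)` for any `f : y ⟶ J x`. Morphisms of `y/J` relate these lifts,
so their domain does not depend on `f` because `y/J` is connected; uniqueness of lifts makes the
diagonal unique.
-/

lemma CategoryTheory.Functor.heq_of_map_heq {C D : Type*} [Category C] [Category D]
    (P : C ⥤ D) [P.Faithful] {a b a' b' : C} {σ : a ⟶ b} {σ' : a' ⟶ b'}
    (ha : a = a') (hb : b = b') (hσ : P.map σ ≍ P.map σ') : σ ≍ σ' := by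
  subst ha hb
  exact heq_of_eq (P.map_injective (eq_of_heq hσ))

lemma CategoryTheory.isConnected_of_surjective_obj {J K : Type*} [Category J] [Category K]
    [IsConnected J] (Φ : J ⥤ K) (hΦ : Function.Surjective Φ.obj) : IsConnected K := by
  have : Nonempty K := ⟨Φ.obj (Classical.arbitrary J)⟩
  refine zigzag_isConnected fun k₁ k₂ => ?_
  obtain ⟨j₁, rfl⟩ := hΦ k₁
  obtain ⟨j₂, rfl⟩ := hΦ k₂
  exact zigzag_obj_of_zigzag Φ (isPreconnected_zigzag j₁ j₂)

lemma eqToHom_comp_map_of_comp_eq {X Y C D : Type*} [Category X] [Category Y] [Category C]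
    [Category D] {J : X ⥤ Y} {T : X ⥤ C} {S : Y ⥤ D} {P : C ⥤ D} (h : J ⋙ S = T ⋙ P)
    {x x' : X} (ξ : x ⟶ x') :
    eqToHom (Functor.congr_obj h x) ≫ P.map (T.map ξ)
      = S.map (J.map ξ) ≫ eqToHom (Functor.congr_obj h x') := by
  have := Functor.congr_hom h ξ
  simp only [Functor.comp_map] at this
  simp [this]

lemma CategoryOfElements.isDiscreteFibration_π_leftOp {B : Type*} [Category B]
    (G : Bᵒᵖ ⥤ Type*) : IsDiscreteFibration (CategoryOfElements.π G).leftOp := by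
  intro c' b β
  refine ⟨⟨Opposite.op ⟨Opposite.op b, G.map β.op c'.unop.2⟩,
    (CategoryOfElements.homMk c'.unop _ β.op rfl).op⟩, rfl, ?_⟩
  rintro ⟨⟨⟨⟨b₀⟩, x₀⟩⟩, ⟨⟨ψ, hψ⟩⟩⟩ hφ
  change c'.unop.1 ⟶ Opposite.op b₀ at ψ
  change G.map ψ c'.unop.2 = x₀ at hψ
  subst hψ
  cases hφ
  rfl

namespace IsDiscreteFibration

section Lift

variable {C D : Type*} [Category C] [Category D] {P : C ⥤ D}

noncomputable def lift (hP : IsDiscreteFibration P) {z : C} {d : D} (β : d ⟶ P.obj z) :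
    Σ c, c ⟶ z :=
  (hP β).exists.choose

variable (hP : IsDiscreteFibration P) {z : C} {d : D} (β : d ⟶ P.obj z)

lemma obj_lift : P.obj (hP.lift β).1 = d :=
  congrArg Sigma.fst (hP β).exists.choose_spec

lemma map_lift_heq : P.map (hP.lift β).2 ≍ β :=
  (Sigma.ext_iff.mp (hP β).exists.choose_spec).2

lemma map_lift : P.map (hP.lift β).2 = eqToHom (hP.obj_lift β) ≫ β := by
  rw [← heq_iff_eq, heq_eqToHom_comp_iff]
  exact hP.map_lift_heq β

include hP in
lemma eq_lift {p : Σ c, c ⟶ z} (hobj : P.obj p.1 = d) (hmap : P.map p.2 ≍ β) :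
    p = hP.lift β :=
  (hP β).unique (Sigma.ext hobj hmap) (hP β).exists.choose_spec

lemma lift_comp {z' : C} (τ : z ⟶ z') {γ : d ⟶ P.obj z'} (hγ : β ≫ P.map τ = γ) :
    ⟨(hP.lift β).1, (hP.lift β).2 ≫ τ⟩ = hP.lift γ := by
  refine hP.eq_lift γ (hP.obj_lift β) ?_
  rw [P.map_comp, map_lift, ← hγ, Category.assoc]
  exact eqToHom_comp_heq _ _

include hP in
lemma faithful : P.Faithful where
  map_injective {c _} σ σ' hσ := by
    have := (hP.eq_lift _ (p := ⟨c, σ⟩) rfl (heq_of_eq hσ)).trans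
      (hP.eq_lift _ (p := ⟨c, σ'⟩) rfl HEq.rfl).symm
    exact eq_of_heq (Sigma.mk.inj_iff.mp this).2

end Lift

section Diagonal

variable {X Y C D : Type*} [Category X] [Category Y] [Category C] [Category D]
  {J : X ⥤ Y} {T : X ⥤ C} {S : Y ⥤ D} {P : C ⥤ D}
  (hP : IsDiscreteFibration P) (h : J ⋙ S = T ⋙ P)

noncomputable def arrowLift {y : Y} (f : StructuredArrow y J) : Σ c, c ⟶ T.obj f.right :=
  hP.lift (S.map f.hom ≫ eqToHom (Functor.congr_obj h f.right))

lemma obj_arrowLift {y : Y} (f : StructuredArrow y J) : P.obj (hP.arrowLift h f).1 = S.obj y :=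
  hP.obj_lift _

lemma map_arrowLift {y : Y} (f : StructuredArrow y J) :
    P.map (hP.arrowLift h f).2
      = eqToHom (hP.obj_arrowLift h f) ≫ S.map f.hom ≫ eqToHom (Functor.congr_obj h f.right) :=
  hP.map_lift _

include hP in
lemma eq_arrowLift {y : Y} (f : StructuredArrow y J) {p : Σ c, c ⟶ T.obj f.right}
    (hobj : P.obj p.1 = S.obj y) (hmap : P.map p.2 ≍ S.map f.hom) : p = hP.arrowLift h f :=
  hP.eq_lift _ hobj (hmap.trans (comp_eqToHom_heq _ _).symm)

lemma arrowLift_comp_map {y : Y} {f g : StructuredArrow y J} (m : f ⟶ g) :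
    ⟨(hP.arrowLift h f).1, (hP.arrowLift h f).2 ≫ T.map m.right⟩ = hP.arrowLift h g := by
  refine hP.lift_comp _ _ ?_
  rw [Category.assoc, eqToHom_comp_map_of_comp_eq h, ← StructuredArrow.w m, S.map_comp,
    Category.assoc]

variable [J.Final]

lemma arrowLift_fst_eq {y : Y} (f g : StructuredArrow y J) :
    (hP.arrowLift h f).1 = (hP.arrowLift h g).1 :=
  constant_of_preserves_morphisms (fun f => (hP.arrowLift h f).1)
    (fun _ _ m => congrArg Sigma.fst (hP.arrowLift_comp_map h m)) f g

noncomputable def diagonalObj (y : Y) : C :=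
  (hP.arrowLift h (Classical.arbitrary (StructuredArrow y J))).1

lemma diagonalObj_eq {y : Y} (f : StructuredArrow y J) :
    hP.diagonalObj h y = (hP.arrowLift h f).1 :=
  hP.arrowLift_fst_eq h _ f

lemma obj_diagonalObj (y : Y) : P.obj (hP.diagonalObj h y) = S.obj y :=
  hP.obj_lift _

lemma diagonalObj_obj (x : X) : hP.diagonalObj h (J.obj x) = T.obj x := by
  refine (hP.diagonalObj_eq h (StructuredArrow.mk (𝟙 (J.obj x)))).trans
    (congrArg Sigma.fst (hP.eq_arrowLift h _ (p := ⟨T.obj x, 𝟙 _⟩)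
      (Functor.congr_obj h x).symm ?_)).symm
  rw [← T.map_id, StructuredArrow.mk_hom_eq_self, ← J.map_id]
  exact (Functor.hcongr_hom h (𝟙 x)).symm

lemma exists_diagonalMap {y y' : Y} (η : y ⟶ y') :
    ∃ σ : hP.diagonalObj h y ⟶ hP.diagonalObj h y', P.map σ ≍ S.map η := by
  let f := Classical.arbitrary (StructuredArrow y' J)
  let β := S.map η ≫ eqToHom (hP.obj_arrowLift h f).symm
  -- The lift of `η` followed by the lift at `f` is the lift at `η ≫ f.hom`, which starts at
  -- `diagonalObj y`.
  have hcomp := hP.lift_comp β (hP.arrowLift h f).2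
    (γ := S.map (StructuredArrow.mk (η ≫ f.hom)).hom ≫ eqToHom (Functor.congr_obj h f.right))
    (by simp [β, map_arrowLift])
  have hdom : (hP.lift β).1 = hP.diagonalObj h y :=
    (congrArg Sigma.fst hcomp).trans (hP.diagonalObj_eq h _).symm
  have hσ : P.map (eqToHom hdom.symm ≫ (hP.lift β).2) ≍ S.map η := by
    rw [P.map_comp, eqToHom_map]
    exact (eqToHom_comp_heq _ _).trans ((hP.map_lift_heq β).trans (comp_eqToHom_heq _ _))
  exact ⟨_, hσ⟩

noncomputable def diagonal : Y ⥤ C :=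
  letI := hP.faithful
  Functor.Faithful.div S P (hP.diagonalObj h) (hP.obj_diagonalObj h)
    (fun η => (hP.exists_diagonalMap h η).choose) (hP.exists_diagonalMap h _).choose_spec

lemma diagonal_comp : hP.diagonal h ⋙ P = S :=
  Functor.hext (hP.obj_diagonalObj h) fun _ _ η => (hP.exists_diagonalMap h η).choose_spec

lemma comp_diagonal : J ⋙ hP.diagonal h = T := by
  have := hP.faithful
  refine Functor.hext (hP.diagonalObj_obj h) fun _ _ ξ =>
    P.heq_of_map_heq (hP.diagonalObj_obj h _) (hP.diagonalObj_obj h _) ?_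
  exact (Functor.hcongr_hom (hP.diagonal_comp h) (J.map ξ)).trans (Functor.hcongr_hom h ξ)

lemma eq_diagonal (L : Y ⥤ C) (hJL : J ⋙ L = T) (hLP : L ⋙ P = S) : L = hP.diagonal h := by
  have := hP.faithful
  have hobj (y : Y) : L.obj y = hP.diagonalObj h y := by
    let f := Classical.arbitrary (StructuredArrow y J)
    refine congrArg Sigma.fst (hP.eq_arrowLift h f
      (p := ⟨L.obj y, L.map f.hom ≫ eqToHom (Functor.congr_obj hJL f.right)⟩)
      (Functor.congr_obj hLP y) ?_)
    rw [P.map_comp, eqToHom_map]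
    exact (comp_eqToHom_heq _ _).trans (Functor.hcongr_hom hLP f.hom)
  refine Functor.hext hobj fun _ _ η => P.heq_of_map_heq (hobj _) (hobj _) ?_
  exact (Functor.hcongr_hom hLP η).trans (Functor.hcongr_hom (hP.diagonal_comp h) η).symm

include hP h in
theorem existsUnique_diagonal : ∃! L : Y ⥤ C, J ⋙ L = T ∧ L ⋙ P = S :=
  ⟨hP.diagonal h, ⟨hP.comp_diagonal h, hP.diagonal_comp h⟩,
    fun L ⟨hJL, hLP⟩ => hP.eq_diagonal h L hJL hLP⟩

end Diagonal

end IsDiscreteFibration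

theorem exists_equivalence_of_final_of_isDiscreteFibration {A C C' B : Type*} [Category A]
    [Category C] [Category C'] [Category B] (E : A ⥤ C) (D : C ⥤ B) (E' : A ⥤ C') (D' : C' ⥤ B)
    [E.Final] [E'.Final] (hD : IsDiscreteFibration D) (hD' : IsDiscreteFibration D')
    (h : E ⋙ D = E' ⋙ D') :
    ∃ I : C ≌ C', E ⋙ I.functor = E' ∧ I.functor ⋙ D' = D := by
  obtain ⟨L, ⟨hEL, hLD⟩, -⟩ := hD'.existsUnique_diagonal h
  obtain ⟨L', ⟨hEL', hLD'⟩, -⟩ := hD.existsUnique_diagonal h.symm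
  have hLL' : L ⋙ L' = 𝟭 C := (hD.existsUnique_diagonal rfl).unique
    ⟨by rw [← Functor.assoc, hEL, hEL'], by rw [Functor.assoc, hLD', hLD]⟩
    ⟨E.comp_id, D.id_comp⟩
  have hL'L : L' ⋙ L = 𝟭 C' := (hD'.existsUnique_diagonal rfl).unique
    ⟨by rw [← Functor.assoc, hEL', hEL], by rw [Functor.assoc, hLD, hLD']⟩
    ⟨E'.comp_id, D'.id_comp⟩
  exact ⟨CategoryTheory.Equivalence.mk L L' (eqToIso hLL'.symm) (eqToIso hL'L), hEL, hLD⟩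

namespace ComprehensiveFactorization

variable {A B : Type*} [Category A] [Category B] (F : A ⥤ B)

abbrev componentsPresheaf : Bᵒᵖ ⥤ Type _ :=
  StructuredArrow.functor F ⋙ Cat.connectedComponents

abbrev Middle := (componentsPresheaf F).Elementsᵒᵖ

lemma componentsPresheaf_map_mk_id {a a' : A} (f : a ⟶ a') :
    (componentsPresheaf F).map (F.map f).op
        (CategoryTheory.ConnectedComponents.mk (StructuredArrow.mk (𝟙 (F.obj a'))))
      = CategoryTheory.ConnectedComponents.mk (StructuredArrow.mk (𝟙 (F.obj a))) :=
  Quotient.sound (Zigzag.of_inv (StructuredArrow.homMk (f := StructuredArrow.mk (𝟙 (F.obj a)))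
    (f' := StructuredArrow.mk (F.map f ≫ 𝟙 (F.obj a'))) f (by simp)))

def finalPart : A ⥤ Middle F where
  obj a := Opposite.op ⟨Opposite.op (F.obj a),
    CategoryTheory.ConnectedComponents.mk (StructuredArrow.mk (𝟙 (F.obj a)))⟩
  map f := Quiver.Hom.op ⟨(F.map f).op, componentsPresheaf_map_mk_id F f⟩
  map_id a := Quiver.Hom.unop_inj (Subtype.ext (congrArg Quiver.Hom.op (F.map_id a)))
  map_comp f g := Quiver.Hom.unop_inj (Subtype.ext (congrArg Quiver.Hom.op (F.map_comp f g)))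

def fibrationPart : Middle F ⥤ B := (CategoryOfElements.π (componentsPresheaf F)).leftOp

variable {F} in
def fromComponent (b : B) (x : CategoryTheory.ConnectedComponents (StructuredArrow b F)) :
    x.Component ⥤ StructuredArrow (Opposite.op ⟨Opposite.op b, x⟩ : Middle F) (finalPart F) where
  obj s := StructuredArrow.mk (Y := s.obj.right) (Quiver.Hom.op ⟨s.obj.hom.op, by
    refine (congrArg CategoryTheory.ConnectedComponents.mk ?_).trans s.property
    change StructuredArrow.mk (s.obj.hom ≫ 𝟙 _) = s.obj
    rw [Category.comp_id]
    exact (StructuredArrow.eq_mk _).symm⟩)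
  map m := StructuredArrow.homMk m.hom.right (Quiver.Hom.unop_inj (Subtype.ext
    (Quiver.Hom.unop_inj (StructuredArrow.w m.hom))))

instance : (finalPart F).Final where
  out c := by
    obtain ⟨⟨⟨b⟩, x⟩⟩ := c
    change CategoryTheory.ConnectedComponents (StructuredArrow b F) at x
    refine isConnected_of_surjective_obj (fromComponent b x) fun j =>
      ⟨⟨StructuredArrow.mk j.hom.unop.1.unop, ?_⟩, rfl⟩
    rw [← Category.comp_id j.hom.unop.1.unop]
    exact j.hom.unop.2

end ComprehensiveFactorization

/-- Comprehensive factorization: every functor factors as a final functor followed by a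
discrete fibration, uniquely up to an equivalence compatible with both parts. -/
theorem comprehensive_factorization {A : Type u} [Category.{v} A] {B : Type u}
    [Category.{v} B] (F : A ⥤ B) :
    (∃ (C : Type (max u v)) (_ : Category.{v} C) (E : A ⥤ C) (D : C ⥤ B),
      E.Final ∧ IsDiscreteFibration D ∧ E ⋙ D = F) ∧
    (∀ (C : Type (max u v)) (_ : Category.{v} C) (E : A ⥤ C) (D : C ⥤ B)
      (C' : Type (max u v)) (_ : Category.{v} C') (E' : A ⥤ C') (D' : C' ⥤ B),
      E.Final → IsDiscreteFibration D → E ⋙ D = F →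
      E'.Final → IsDiscreteFibration D' → E' ⋙ D' = F →
      ∃ (I : C ≌ C'), Nonempty (E ⋙ I.functor ≅ E') ∧ Nonempty (I.functor ⋙ D' ≅ D)) := by
  refine ⟨⟨ComprehensiveFactorization.Middle F, inferInstance,
    ComprehensiveFactorization.finalPart F, ComprehensiveFactorization.fibrationPart F, inferInstance,
    CategoryOfElements.isDiscreteFibration_π_leftOp _, rfl⟩, ?_⟩
  intro C _ E D C' _ E' D' _ hD hED _ hD' hED'
  obtain ⟨I, hEI, hID⟩ :=
    exists_equivalence_of_final_of_isDiscreteFibration E D E' D' hD hD' (hED.trans hED'.symm)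
  exact ⟨I, ⟨eqToIso hEI⟩, ⟨eqToIso hID⟩⟩
end

section
/- Final functors are left orthogonal to discrete fibrations: given a commutative square D ∘ U = V ∘ E in Cat with E : A ⥤ A' final and D : X ⥤ Y a discrete fibration, there exists a unique functor W : A' ⥤ X with W ∘ E = U and D ∘ W = V. -/
open CategoryTheory

universe w v u

/-!
For `a' : A'` and an object `s = (a, f : a' ⟶ E a)` of `a' / E`, lift `V f` along `D` to an
arrow ending at `U a`. A morphism `s ⟶ s'` of `a' / E` changes this lift only by postcomposition
with an arrow in the image of `U`, so the source of the lift is constant on `a' / E`, which is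
connected because `E` is final; this source is `W a'`. On morphisms `W` is then forced by unique
lifting. Any other solution `W'` sends `a'` to the source of a lift of `V f`, namely `W' f`,
and `D` is faithful, so `W' = W`.
-/

theorem CategoryTheory.Functor.ext_of_comp_faithful {C X Y : Type*} [Category C] [Category X]
    [Category Y] (D : X ⥤ Y) [D.Faithful] {F G : C ⥤ X} (hobj : ∀ c, F.obj c = G.obj c)
    (h : F ⋙ D = G ⋙ D) : F = G :=
  Functor.ext hobj fun _ _ f => D.map_injective (by simpa [eqToHom_map] using Functor.congr_hom h f)

namespace IsDiscreteFibration

section Lifts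

variable {C X Y : Type*} [Category C] [Category X] [Category Y] {D : X ⥤ Y}
  (hD : IsDiscreteFibration D)

noncomputable def liftObj {x : X} {b : Y} (β : b ⟶ D.obj x) : X := (hD β).exists.choose.1

noncomputable def liftHom {x : X} {b : Y} (β : b ⟶ D.obj x) : hD.liftObj β ⟶ x :=
  (hD β).exists.choose.2

lemma obj_liftObj {x : X} {b : Y} (β : b ⟶ D.obj x) : D.obj (hD.liftObj β) = b :=
  congrArg Sigma.fst (hD β).exists.choose_spec

lemma map_liftHom {x : X} {b : Y} (β : b ⟶ D.obj x) :
    D.map (hD.liftHom β) = eqToHom (hD.obj_liftObj β) ≫ β := by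
  rw [← heq_iff_eq, heq_eqToHom_comp_iff]
  exact (Sigma.mk.inj_iff.mp (hD β).exists.choose_spec).2

lemma eq_liftObj {x z : X} {b : Y} (β : b ⟶ D.obj x) (f : z ⟶ x) (h : D.obj z = b)
    (hf : D.map f = eqToHom h ≫ β) : z = hD.liftObj β := by
  have hlift : (⟨D.obj z, D.map f⟩ : Σ y, y ⟶ D.obj x) = ⟨b, β⟩ := by
    subst h
    simp [hf]
  exact congrArg Sigma.fst ((hD β).unique (y₁ := ⟨z, f⟩) hlift (hD β).exists.choose_spec)

lemma liftObj_comp_map {x x' : X} {b : Y} (β : b ⟶ D.obj x) (f : x ⟶ x') :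
    hD.liftObj (β ≫ D.map f) = hD.liftObj β :=
  (hD.eq_liftObj _ (hD.liftHom β ≫ f) (hD.obj_liftObj β) (by simp [map_liftHom])).symm

lemma faithful_s9 (hD : IsDiscreteFibration D) : D.Faithful where
  map_injective {z x} f g hfg := by
    have hf : (⟨z, f⟩ : Σ z, z ⟶ x) = ⟨z, g⟩ :=
      (hD (D.map g)).unique (y₁ := ⟨z, f⟩) (by simp only [hfg]) rfl
    simpa using hf

noncomputable def liftFunctor (V : C ⥤ Y) (obj : C → X) (h_obj : ∀ c, D.obj (obj c) = V.obj c)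
    (h_lift : ∀ {c c'} (g : c ⟶ c'), hD.liftObj (V.map g ≫ eqToHom (h_obj c').symm) = obj c) :
    C ⥤ X :=
  haveI := hD.faithful_s9
  Functor.Faithful.div V D obj h_obj (fun g => eqToHom (h_lift g).symm ≫ hD.liftHom _)
    (by simp [eqToHom_map, map_liftHom])

lemma liftFunctor_comp (V : C ⥤ Y) (obj : C → X) (h_obj : ∀ c, D.obj (obj c) = V.obj c)
    (h_lift : ∀ {c c'} (g : c ⟶ c'), hD.liftObj (V.map g ≫ eqToHom (h_obj c').symm) = obj c) :
    hD.liftFunctor V obj h_obj h_lift ⋙ D = V :=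
  Functor.hext h_obj fun _ _ _ => by
    simp [liftFunctor, Functor.Faithful.div, eqToHom_map, map_liftHom]

end Lifts

section Square

variable {A A' X Y : Type*} [Category A] [Category A'] [Category X] [Category Y]
  {E : A ⥤ A'} {D : X ⥤ Y} {U : A ⥤ X} {V : A' ⥤ Y} (hD : IsDiscreteFibration D)
  (hsq : U ⋙ D = E ⋙ V)

noncomputable def fillerObjAt {a' : A'} (s : StructuredArrow a' E) : X :=
  hD.liftObj (V.map s.hom ≫ eqToHom (Functor.congr_obj hsq s.right).symm)

lemma fillerObjAt_eq_of_hom {a' : A'} {s s' : StructuredArrow a' E} (t : s ⟶ s') :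
    hD.fillerObjAt hsq s' = hD.fillerObjAt hsq s := by
  have hβ : V.map s'.hom ≫ eqToHom (Functor.congr_obj hsq s'.right).symm =
      (V.map s.hom ≫ eqToHom (Functor.congr_obj hsq s.right).symm) ≫ D.map (U.map t.right) := by
    rw [← StructuredArrow.w t, Functor.map_comp, Category.assoc, Category.assoc,
      ← Functor.comp_map U D, Functor.congr_hom hsq t.right]
    simp
  rw [fillerObjAt, fillerObjAt, hβ, liftObj_comp_map]

variable [E.Final]

noncomputable def fillerObj (a' : A') : X :=
  hD.fillerObjAt hsq (Classical.arbitrary (StructuredArrow a' E))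

lemma fillerObjAt_eq_fillerObj {a' : A'} (s : StructuredArrow a' E) :
    hD.fillerObjAt hsq s = hD.fillerObj hsq a' :=
  constant_of_preserves_morphisms (hD.fillerObjAt hsq)
    (fun _ _ t => (hD.fillerObjAt_eq_of_hom hsq t).symm) _ _

lemma obj_fillerObj (a' : A') : D.obj (hD.fillerObj hsq a') = V.obj a' := hD.obj_liftObj _

lemma liftObj_fillerObj {a' a'' : A'} (g : a' ⟶ a'') :
    hD.liftObj (V.map g ≫ eqToHom (hD.obj_fillerObj hsq a'').symm) = hD.fillerObj hsq a' := by
  let s := Classical.arbitrary (StructuredArrow a'' E)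
  let β := V.map s.hom ≫ eqToHom (Functor.congr_obj hsq s.right).symm
  calc hD.liftObj (V.map g ≫ eqToHom _)
      = hD.liftObj ((V.map g ≫ eqToHom (hD.obj_liftObj β).symm) ≫ D.map (hD.liftHom β)) :=
        (hD.liftObj_comp_map _ _).symm
    _ = hD.fillerObjAt hsq (StructuredArrow.mk (g ≫ s.hom)) := by
        simp [fillerObjAt, map_liftHom, β]
    _ = hD.fillerObj hsq a' := hD.fillerObjAt_eq_fillerObj hsq _

lemma fillerObj_obj (a : A) : hD.fillerObj hsq (E.obj a) = U.obj a := by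
  rw [← hD.fillerObjAt_eq_fillerObj hsq (StructuredArrow.mk (𝟙 (E.obj a)))]
  exact (hD.eq_liftObj _ (𝟙 (U.obj a)) (Functor.congr_obj hsq a) (by simp)).symm

lemma obj_eq_fillerObj (W : A' ⥤ X) (hEW : E ⋙ W = U) (hWD : W ⋙ D = V) (a' : A') :
    W.obj a' = hD.fillerObj hsq a' := by
  obtain ⟨s⟩ : Nonempty (StructuredArrow a' E) := inferInstance
  rw [← hD.fillerObjAt_eq_fillerObj hsq s]
  refine hD.eq_liftObj _ (W.map s.hom ≫ eqToHom (Functor.congr_obj hEW s.right))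
    (Functor.congr_obj hWD a') ?_
  rw [Functor.map_comp, eqToHom_map, ← Functor.comp_map W D, Functor.congr_hom hWD]
  simp

noncomputable def filler : A' ⥤ X :=
  hD.liftFunctor V (hD.fillerObj hsq) (hD.obj_fillerObj hsq) (hD.liftObj_fillerObj hsq)

lemma filler_comp : hD.filler hsq ⋙ D = V := hD.liftFunctor_comp _ _ _ _

end Square

end IsDiscreteFibration

/-- Final functors are left orthogonal to discrete fibrations. -/
theorem final_leftOrthogonal_discreteFibration {A A' X Y : Type u} [Category.{v} A]
    [Category.{v} A'] [Category.{v} X] [Category.{v} Y]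
    (E : A ⥤ A') (D : X ⥤ Y) (U : A ⥤ X) (V : A' ⥤ Y)
    (hE : E.Final) (hD : IsDiscreteFibration D) (hsq : U ⋙ D = E ⋙ V) :
    ∃! W : A' ⥤ X, E ⋙ W = U ∧ W ⋙ D = V := by
  have := hD.faithful_s9
  refine ⟨hD.filler hsq, ⟨?_, hD.filler_comp hsq⟩, fun W ⟨hEW, hWD⟩ => ?_⟩
  · exact D.ext_of_comp_faithful (hD.fillerObj_obj hsq)
      (by rw [Functor.assoc, hD.filler_comp hsq, hsq])
  · exact D.ext_of_comp_faithful (hD.obj_eq_fillerObj hsq W hEW hWD)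
      (by rw [hWD, hD.filler_comp hsq])
end

section
/- Let A, B, C be groupoids and S : Bᵒᵖ × A ⥤ Type, T : Cᵒᵖ × B ⥤ Type distributors, with associated element categories 𝕊 ⥤ A × B and 𝕋 ⥤ B × C (discrete fibrations). Let T ⋄ S be the pullback of S₂ : 𝕊 ⥤ B along T₁ : 𝕋 ⥤ B, and let T ⊗ S be the coend composite distributor (T⊗S)(c,a) = ∫^b T(c,b) × S(b,a). Then the canonical functor Q : T ⋄ S ⥤ 𝕋⊗𝕊 into the category of elements of T ⊗ S, sending ((s,t), pairs of morphisms) to the class s ⊗ t, is a final functor. -/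
/-! Fix an object `(a, c, q)` of `𝕋⊗𝕊`. Each representative `(b, t, s)` of `q` gives an arrow
`(a, c, q) ⟶ Q (a, b, c, s, t)` with identity components, and every arrow `(a, c, q) ⟶ Q X`
receives a map from one of these: since `A` and `C` are groupoids, `X` can be reindexed along the
components of the arrow. A generating step `(t, s'·β) ∼ (β·t, s')` of the coend relation is a map
between the corresponding arrows, so all of them lie in one connected component. -/

open CategoryTheory Opposite

universe w v u

section PairLemmas

universe u1 v1 u2 v2

variable {X : Type u1} [Category.{v1} X] {Y : Type u2} [Category.{v2} Y]

lemma pair_comp_fst {x1 x2 x3 : X} {y : Y} (f : x1 ⟶ x2) (g : x2 ⟶ x3) :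
    @CategoryStruct.comp (X × Y) _ (x1, y) (x2, y) (x3, y) (f, 𝟙 y) (g, 𝟙 y) =
      (f ≫ g, 𝟙 y) := by
  simp [prod_comp]

lemma pair_comp_snd {x : X} {y1 y2 y3 : Y} (f : y1 ⟶ y2) (g : y2 ⟶ y3) :
    @CategoryStruct.comp (X × Y) _ (x, y1) (x, y2) (x, y3) (𝟙 x, f) (𝟙 x, g) =
      (𝟙 x, f ≫ g) := by
  simp [prod_comp]

lemma pair_swap {x1 x2 : X} {y1 y2 : Y} (f : x1 ⟶ x2) (g : y1 ⟶ y2) :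
    @CategoryStruct.comp (X × Y) _ (x1, y1) (x2, y1) (x2, y2) (f, 𝟙 y1) (𝟙 x2, g) =
      @CategoryStruct.comp (X × Y) _ (x1, y1) (x1, y2) (x2, y2) (𝟙 x1, g) (f, 𝟙 y2) := by
  simp [prod_comp]

end PairLemmas

section Distrib

variable {A : Type u} [Groupoid.{u} A] {B : Type u} [Groupoid.{u} B]

/-- Compatibility of the two actions of a distributor with composition. -/
lemma dist_comm_comp (S : Bᵒᵖ × A ⥤ Type u)
    {a1 a2 a3 : A} {b1 b2 b3 : B} (α1 : a1 ⟶ a2) (α2 : a2 ⟶ a3)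
    (β1 : b1 ⟶ b2) (β2 : b2 ⟶ b3)
    {s1 : S.obj (op b1, a1)} {s2 : S.obj (op b2, a2)} {s3 : S.obj (op b3, a3)}
    (h1 : S.map ((𝟙 (op b1), α1) : (op b1, a1) ⟶ (op b1, a2)) s1 =
      S.map ((β1.op, 𝟙 a2) : (op b2, a2) ⟶ (op b1, a2)) s2)
    (h2 : S.map ((𝟙 (op b2), α2) : (op b2, a2) ⟶ (op b2, a3)) s2 =
      S.map ((β2.op, 𝟙 a3) : (op b3, a3) ⟶ (op b2, a3)) s3) :
    S.map ((𝟙 (op b1), α1 ≫ α2) : (op b1, a1) ⟶ (op b1, a3)) s1 =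
      S.map (((β1 ≫ β2).op, 𝟙 a3) : (op b3, a3) ⟶ (op b1, a3)) s3 := by
  calc S.map ((𝟙 (op b1), α1 ≫ α2) : (op b1, a1) ⟶ (op b1, a3)) s1
      = S.map ((𝟙 (op b1), α2) : (op b1, a2) ⟶ (op b1, a3))
          (S.map ((𝟙 (op b1), α1) : (op b1, a1) ⟶ (op b1, a2)) s1) := by
        rw [← FunctorToTypes.map_comp_apply]; congr 3; simp [prod_comp]
    _ = S.map ((𝟙 (op b1), α2) : (op b1, a2) ⟶ (op b1, a3))
          (S.map ((β1.op, 𝟙 a2) : (op b2, a2) ⟶ (op b1, a2)) s2) := by rw [h1]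
    _ = S.map ((β1.op, 𝟙 a3) : (op b2, a3) ⟶ (op b1, a3))
          (S.map ((𝟙 (op b2), α2) : (op b2, a2) ⟶ (op b2, a3)) s2) := by
        rw [← FunctorToTypes.map_comp_apply, ← FunctorToTypes.map_comp_apply]
        congr 2; simp [prod_comp]
    _ = S.map ((β1.op, 𝟙 a3) : (op b2, a3) ⟶ (op b1, a3))
          (S.map ((β2.op, 𝟙 a3) : (op b3, a3) ⟶ (op b2, a3)) s3) := by rw [h2]
    _ = S.map (((β1 ≫ β2).op, 𝟙 a3) : (op b3, a3) ⟶ (op b1, a3)) s3 := by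
        rw [← FunctorToTypes.map_comp_apply]; congr 3; simp [prod_comp]

end Distrib

/-- The category of elements `𝕊` of a distributor `S : Bᵒᵖ × A ⥤ Type`. -/
structure Delt {A : Type u} [Groupoid.{u} A] {B : Type u} [Groupoid.{u} B]
    (S : Bᵒᵖ × A ⥤ Type u) where
  a : A
  b : B
  s : S.obj (op b, a)

namespace Delt

variable {A : Type u} [Groupoid.{u} A] {B : Type u} [Groupoid.{u} B] {S : Bᵒᵖ × A ⥤ Type u}

/-- Morphisms in the category of elements of a distributor. -/
@[ext]
structure Hom (X Y : Delt S) where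
  α : X.a ⟶ Y.a
  β : X.b ⟶ Y.b
  comm : S.map ((𝟙 (op X.b), α) : (op X.b, X.a) ⟶ (op X.b, Y.a)) X.s =
      S.map ((β.op, 𝟙 Y.a) : (op Y.b, Y.a) ⟶ (op X.b, Y.a)) Y.s

instance : Category (Delt S) where
  Hom := Hom
  id X := ⟨𝟙 X.a, 𝟙 X.b, by simp⟩
  comp {X Y Z} f g := ⟨f.α ≫ g.α, f.β ≫ g.β, dist_comm_comp S f.α g.α f.β g.β f.comm g.comm⟩
  id_comp f := by apply Hom.ext <;> simp
  comp_id f := by apply Hom.ext <;> simp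
  assoc f g h := by apply Hom.ext <;> simp

/-- The projection `𝕊 ⥤ A × B`. -/
def proj (S : Bᵒᵖ × A ⥤ Type u) : Delt S ⥤ A × B where
  obj X := (X.a, X.b)
  map {X Y} f := (Hom.α f, Hom.β f)
  map_id X := rfl
  map_comp f g := rfl

end Delt

section Tensor

variable {A : Type u} [Groupoid.{u} A] {B : Type u} [Groupoid.{u} B]
  {C : Type u} [Groupoid.{u} C]

/-- The relation generating the coend quotient: `(t, s'·β) ∼ (β·t, s')`. -/
def TensorRel (S : Bᵒᵖ × A ⥤ Type u) (T : Cᵒᵖ × B ⥤ Type u) (c : Cᵒᵖ) (a : A) :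
    (Σ b : B, T.obj (c, b) × S.obj (op b, a)) →
    (Σ b : B, T.obj (c, b) × S.obj (op b, a)) → Prop :=
  fun p q => ∃ β : p.1 ⟶ q.1,
    q.2.1 = T.map ((𝟙 c, β) : (c, p.1) ⟶ (c, q.1)) p.2.1 ∧
    p.2.2 = S.map ((β.op, 𝟙 a) : (op q.1, a) ⟶ (op p.1, a)) q.2.2

/-- The composite distributor `T ⊗ S`, given by the coend
`(T ⊗ S)(c,a) = ∫^b T(c,b) × S(b,a)`. -/
def Tensor (S : Bᵒᵖ × A ⥤ Type u) (T : Cᵒᵖ × B ⥤ Type u) : Cᵒᵖ × A ⥤ Type u where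
  obj x := Quot (TensorRel S T x.1 x.2)
  map {x y} f := TypeCat.ofHom (Quot.map
    (fun p => ⟨p.1, T.map ((f.1, 𝟙 p.1) : (x.1, p.1) ⟶ (y.1, p.1)) p.2.1,
      S.map ((𝟙 (op p.1), f.2) : (op p.1, x.2) ⟶ (op p.1, y.2)) p.2.2⟩)
    (by
      rintro ⟨b, t, s⟩ ⟨b', t', s'⟩ ⟨β, h1, h2⟩
      dsimp only at h1 h2 ⊢
      refine ⟨β, ?_, ?_⟩
      · rw [h1, ← FunctorToTypes.map_comp_apply, ← FunctorToTypes.map_comp_apply, pair_swap]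
      · rw [h2, ← FunctorToTypes.map_comp_apply, ← FunctorToTypes.map_comp_apply, pair_swap]))
  map_id x := by
    ext q; refine Quot.inductionOn q fun p => ?_
    obtain ⟨b, t, s⟩ := p
    show Quot.mk (TensorRel S T x.1 x.2)
        ⟨b, T.map ((𝟙 x.1, 𝟙 b) : (x.1, b) ⟶ (x.1, b)) t,
          S.map ((𝟙 (op b), 𝟙 x.2) : (op b, x.2) ⟶ (op b, x.2)) s⟩ =
      Quot.mk (TensorRel S T x.1 x.2) ⟨b, t, s⟩
    have e1 : T.map ((𝟙 x.1, 𝟙 b) : (x.1, b) ⟶ (x.1, b)) t = t := by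
      rw [show ((𝟙 x.1, 𝟙 b) : (x.1, b) ⟶ (x.1, b)) = 𝟙 (x.1, b) from rfl,
        FunctorToTypes.map_id_apply]
    have e2 : S.map ((𝟙 (op b), 𝟙 x.2) : (op b, x.2) ⟶ (op b, x.2)) s = s := by
      rw [show ((𝟙 (op b), 𝟙 x.2) : (op b, x.2) ⟶ (op b, x.2)) = 𝟙 (op b, x.2) from rfl,
        FunctorToTypes.map_id_apply]
    rw [e1, e2]
  map_comp {x y z} f g := by
    ext q; refine Quot.inductionOn q fun p => ?_
    obtain ⟨b, t, s⟩ := p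
    show Quot.mk (TensorRel S T z.1 z.2)
        ⟨b, T.map ((f.1 ≫ g.1, 𝟙 b) : (x.1, b) ⟶ (z.1, b)) t,
          S.map ((𝟙 (op b), f.2 ≫ g.2) : (op b, x.2) ⟶ (op b, z.2)) s⟩ =
      Quot.mk (TensorRel S T z.1 z.2)
        ⟨b, T.map ((g.1, 𝟙 b) : (y.1, b) ⟶ (z.1, b))
              (T.map ((f.1, 𝟙 b) : (x.1, b) ⟶ (y.1, b)) t),
          S.map ((𝟙 (op b), g.2) : (op b, y.2) ⟶ (op b, z.2))
            (S.map ((𝟙 (op b), f.2) : (op b, x.2) ⟶ (op b, y.2)) s)⟩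
    have e1 : T.map ((f.1 ≫ g.1, 𝟙 b) : (x.1, b) ⟶ (z.1, b)) t =
        T.map ((g.1, 𝟙 b) : (y.1, b) ⟶ (z.1, b))
          (T.map ((f.1, 𝟙 b) : (x.1, b) ⟶ (y.1, b)) t) := by
      rw [← pair_comp_fst, FunctorToTypes.map_comp_apply]
    have e2 : S.map ((𝟙 (op b), f.2 ≫ g.2) : (op b, x.2) ⟶ (op b, z.2)) s =
        S.map ((𝟙 (op b), g.2) : (op b, y.2) ⟶ (op b, z.2))
          (S.map ((𝟙 (op b), f.2) : (op b, x.2) ⟶ (op b, y.2)) s) := by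
      rw [← pair_comp_snd, FunctorToTypes.map_comp_apply]
    rw [e1, e2]

end Tensor

section Diamond

variable {A : Type u} [Groupoid.{u} A] {B : Type u} [Groupoid.{u} B]
  {C : Type u} [Groupoid.{u} C]

/-- The (strict) pullback `T ⋄ S` of the two element categories `𝕊 ⥤ B` and `𝕋 ⥤ B`. -/
structure Diamond (S : Bᵒᵖ × A ⥤ Type u) (T : Cᵒᵖ × B ⥤ Type u) where
  a : A
  b : B
  c : C
  s : S.obj (op b, a)
  t : T.obj (op c, b)

namespace Diamond

variable {S : Bᵒᵖ × A ⥤ Type u} {T : Cᵒᵖ × B ⥤ Type u}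

/-- Morphisms in the pullback `T ⋄ S`. -/
@[ext]
structure Hom (X Y : Diamond S T) where
  α : X.a ⟶ Y.a
  β : X.b ⟶ Y.b
  γ : X.c ⟶ Y.c
  commS : S.map ((𝟙 (op X.b), α) : (op X.b, X.a) ⟶ (op X.b, Y.a)) X.s =
      S.map ((β.op, 𝟙 Y.a) : (op Y.b, Y.a) ⟶ (op X.b, Y.a)) Y.s
  commT : T.map ((𝟙 (op X.c), β) : (op X.c, X.b) ⟶ (op X.c, Y.b)) X.t =
      T.map ((γ.op, 𝟙 Y.b) : (op Y.c, Y.b) ⟶ (op X.c, Y.b)) Y.t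

instance : Category (Diamond S T) where
  Hom := Hom
  id X := ⟨𝟙 X.a, 𝟙 X.b, 𝟙 X.c, by simp, by simp⟩
  comp {X Y Z} f g := ⟨f.α ≫ g.α, f.β ≫ g.β, f.γ ≫ g.γ,
    dist_comm_comp S f.α g.α f.β g.β f.commS g.commS,
    dist_comm_comp T f.β g.β f.γ g.γ f.commT g.commT⟩
  id_comp f := by apply Hom.ext <;> simp
  comp_id f := by apply Hom.ext <;> simp
  assoc f g h := by apply Hom.ext <;> simp

/-- The projection of the pullback span to `A × C`. -/
def proj (S : Bᵒᵖ × A ⥤ Type u) (T : Cᵒᵖ × B ⥤ Type u) : Diamond S T ⥤ A × C where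
  obj X := (X.a, X.c)
  map {X Y} f := (Hom.α f, Hom.γ f)
  map_id X := rfl
  map_comp f g := rfl

end Diamond

/-- The canonical comparison functor `T ⋄ S ⥤ 𝕋 ⊗ 𝕊` from the pullback of the element
categories to the category of elements of the composite distributor, sending `(s, t)` to
the class `s ⊗ t`. -/
def Qfun (S : Bᵒᵖ × A ⥤ Type u) (T : Cᵒᵖ × B ⥤ Type u) :
    Diamond S T ⥤ Delt (Tensor S T) where
  obj X := ⟨X.a, X.c, Quot.mk _ ⟨X.b, X.t, X.s⟩⟩
  map {X Y} f := ⟨Diamond.Hom.α f, Diamond.Hom.γ f, by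
    show Quot.mk (TensorRel S T (op X.c) Y.a)
        ⟨X.b, T.map ((𝟙 (op X.c), 𝟙 X.b) : (op X.c, X.b) ⟶ (op X.c, X.b)) X.t,
          S.map ((𝟙 (op X.b), f.α) : (op X.b, X.a) ⟶ (op X.b, Y.a)) X.s⟩ =
      Quot.mk (TensorRel S T (op X.c) Y.a)
        ⟨Y.b, T.map ((f.γ.op, 𝟙 Y.b) : (op Y.c, Y.b) ⟶ (op X.c, Y.b)) Y.t,
          S.map ((𝟙 (op Y.b), 𝟙 Y.a) : (op Y.b, Y.a) ⟶ (op Y.b, Y.a)) Y.s⟩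
    have e1 : T.map ((𝟙 (op X.c), 𝟙 X.b) : (op X.c, X.b) ⟶ (op X.c, X.b)) X.t = X.t := by
      rw [show ((𝟙 (op X.c), 𝟙 X.b) : (op X.c, X.b) ⟶ (op X.c, X.b)) = 𝟙 (op X.c, X.b)
        from rfl, FunctorToTypes.map_id_apply]
    have e2 : S.map ((𝟙 (op Y.b), 𝟙 Y.a) : (op Y.b, Y.a) ⟶ (op Y.b, Y.a)) Y.s = Y.s := by
      rw [show ((𝟙 (op Y.b), 𝟙 Y.a) : (op Y.b, Y.a) ⟶ (op Y.b, Y.a)) = 𝟙 (op Y.b, Y.a)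
        from rfl, FunctorToTypes.map_id_apply]
    rw [e1, e2]
    exact Quot.sound ⟨Diamond.Hom.β f, (Diamond.Hom.commT f).symm, Diamond.Hom.commS f⟩⟩
  map_id X := by apply Delt.Hom.ext <;> rfl
  map_comp f g := by apply Delt.Hom.ext <;> rfl

lemma map_pair_id_apply {X Y : Type*} [Category X] [Category Y] (F : X × Y ⥤ Type w)
    {x : X} {y : Y} (z : F.obj (x, y)) : F.map ((𝟙 x, 𝟙 y) : (x, y) ⟶ (x, y)) z = z :=
  F.map_id_apply (x, y) z

lemma map_pair_inv_map_apply {X Y : Type*} [Category X] [Groupoid Y] (F : X × Y ⥤ Type w)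
    {x : X} {y y' : Y} (α : y ⟶ y') (z : F.obj (x, y)) :
    F.map ((𝟙 x, Groupoid.inv α) : (x, y') ⟶ (x, y))
      (F.map ((𝟙 x, α) : (x, y) ⟶ (x, y')) z) = z := by
  rw [← Functor.map_comp_apply, pair_comp_snd, Groupoid.comp_inv, map_pair_id_apply]

lemma map_pair_map_inv_apply {X Y : Type*} [Category X] [Groupoid Y] (F : X × Y ⥤ Type w)
    {x : X} {y y' : Y} (α : y ⟶ y') (z : F.obj (x, y')) :
    F.map ((𝟙 x, α) : (x, y) ⟶ (x, y'))
      (F.map ((𝟙 x, Groupoid.inv α) : (x, y') ⟶ (x, y)) z) = z := by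
  rw [← Functor.map_comp_apply, pair_comp_snd, Groupoid.inv_comp, map_pair_id_apply]

namespace Delt

variable {S : Bᵒᵖ × A ⥤ Type u}

lemma s_eq_of_hom {a : A} {b : B} {s s' : S.obj (op b, a)} {Z : Delt S}
    (f : (⟨a, b, s⟩ : Delt S) ⟶ Z) (g : (⟨a, b, s'⟩ : Delt S) ⟶ Z)
    (hα : Hom.α f = Hom.α g) (hβ : Hom.β f = Hom.β g) : s = s' := by
  have comm : S.map ((𝟙 (op b), Hom.α f) : (op b, a) ⟶ (op b, Z.a)) s =
      S.map ((𝟙 (op b), Hom.α f) : (op b, a) ⟶ (op b, Z.a)) s' := by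
    rw [f.comm, hα, hβ]; exact g.comm.symm
  rw [← map_pair_inv_map_apply S (Hom.α f) s, comm, map_pair_inv_map_apply]

end Delt

namespace Diamond

variable {S : Bᵒᵖ × A ⥤ Type u} {T : Cᵒᵖ × B ⥤ Type u}

def reindex (X : Diamond S T) {a : A} {c : C} (α : a ⟶ X.a) (γ : c ⟶ X.c) : Diamond S T :=
  ⟨a, X.b, c, S.map ((𝟙 (op X.b), Groupoid.inv α) : (op X.b, X.a) ⟶ (op X.b, a)) X.s,
    T.map ((γ.op, 𝟙 X.b) : (op X.c, X.b) ⟶ (op c, X.b)) X.t⟩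

def reindexHom (X : Diamond S T) {a : A} {c : C} (α : a ⟶ X.a) (γ : c ⟶ X.c) :
    X.reindex α γ ⟶ X :=
  ⟨α, 𝟙 X.b, γ, (map_pair_map_inv_apply S α X.s).trans (map_pair_id_apply S X.s).symm,
    map_pair_id_apply T _⟩

end Diamond

namespace Qfun

variable {S : Bᵒᵖ × A ⥤ Type u} {T : Cᵒᵖ × B ⥤ Type u}
  {a : A} {c : C} {q : (Tensor S T).obj (op c, a)}

def normalArrow (p : Σ b : B, T.obj (op c, b) × S.obj (op b, a))
    (hp : Quot.mk (TensorRel S T (op c) a) p = q) :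
    StructuredArrow (⟨a, c, q⟩ : Delt (Tensor S T)) (Qfun S T) :=
  StructuredArrow.mk (Y := (⟨a, p.1, c, p.2.2, p.2.1⟩ : Diamond S T))
    ⟨𝟙 a, 𝟙 c, by subst hp; rfl⟩

def normalArrowHom {p p' : Σ b : B, T.obj (op c, b) × S.obj (op b, a)}
    (hp : Quot.mk (TensorRel S T (op c) a) p = q)
    (hp' : Quot.mk (TensorRel S T (op c) a) p' = q) (β : p.1 ⟶ p'.1)
    (hT : p'.2.1 = T.map ((𝟙 (op c), β) : (op c, p.1) ⟶ (op c, p'.1)) p.2.1)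
    (hS : p.2.2 = S.map ((β.op, 𝟙 a) : (op p'.1, a) ⟶ (op p.1, a)) p'.2.2) :
    normalArrow p hp ⟶ normalArrow p' hp' :=
  StructuredArrow.homMk
    ⟨𝟙 a, β, 𝟙 c, (map_pair_id_apply S _).trans hS, hT.symm.trans (map_pair_id_apply T _).symm⟩
    (Delt.Hom.ext (Category.id_comp _) (Category.id_comp _))

lemma zigzag_normalArrow {p p' : Σ b : B, T.obj (op c, b) × S.obj (op b, a)}
    (h : Relation.EqvGen (TensorRel S T (op c) a) p p')
    (hp : Quot.mk (TensorRel S T (op c) a) p = q)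
    (hp' : Quot.mk (TensorRel S T (op c) a) p' = q) :
    Zigzag (normalArrow p hp) (normalArrow p' hp') := by
  induction h with
  | rel x y hxy =>
    obtain ⟨β, hT, hS⟩ := hxy
    exact Zigzag.of_hom (normalArrowHom hp hp' β hT hS)
  | refl x => exact Relation.ReflTransGen.refl
  | symm x y _ ih => exact (ih hp' hp).symm
  | trans x y z hxy _ ih₁ ih₂ =>
    have hy : Quot.mk _ y = q := (Quot.eqvGen_sound hxy).symm.trans hp
    exact (ih₁ hp hy).trans (ih₂ hy hp')

lemma exists_normalArrow_hom (g : StructuredArrow (⟨a, c, q⟩ : Delt (Tensor S T)) (Qfun S T)) :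
    ∃ (p : Σ b : B, T.obj (op c, b) × S.obj (op b, a))
      (hp : Quot.mk (TensorRel S T (op c) a) p = q), Nonempty (normalArrow p hp ⟶ g) := by
  let r := g.right.reindexHom (Delt.Hom.α g.hom) (Delt.Hom.β g.hom)
  exact ⟨_, Delt.s_eq_of_hom ((Qfun S T).map r) g.hom rfl rfl,
    ⟨StructuredArrow.homMk r (Delt.Hom.ext (Category.id_comp _) (Category.id_comp _))⟩⟩

end Qfun

/-- The canonical comparison functor from the pullback `T ⋄ S` of the element categories to
the category of elements of the composite distributor `T ⊗ S` is final. -/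
theorem Qfun_final {A : Type u} [Groupoid.{u} A] {B : Type u} [Groupoid.{u} B]
    {C : Type u} [Groupoid.{u} C] (S : Bᵒᵖ × A ⥤ Type u) (T : Cᵒᵖ × B ⥤ Type u) :
    (Qfun S T).Final := by
  refine ⟨fun ⟨a, c, q⟩ => ?_⟩
  obtain ⟨p₀, hp₀⟩ := Quot.exists_rep q
  have : Nonempty (StructuredArrow (⟨a, c, q⟩ : Delt (Tensor S T)) (Qfun S T)) :=
    ⟨Qfun.normalArrow p₀ hp₀⟩
  refine zigzag_isConnected fun g₁ g₂ => ?_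
  obtain ⟨p₁, hp₁, ⟨f₁⟩⟩ := Qfun.exists_normalArrow_hom g₁
  obtain ⟨p₂, hp₂, ⟨f₂⟩⟩ := Qfun.exists_normalArrow_hom g₂
  have h₁₂ := Qfun.zigzag_normalArrow (Quot.eqvGen_exact (hp₁.trans hp₂.symm)) hp₁ hp₂
  exact ((Zigzag.of_hom f₁).symm.trans h₁₂).trans (Zigzag.of_hom f₂)
end Diamond
end
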